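/- arXiv:2604.15159 — 5 statements merged into one kernel-verified Lean document; each statement's English description precedes it below -/
import Mathlib

section
/- Fix ρ ≠ 0, real numbers h, h̃ > 0 and w, w̃ ∈ ℝ, and define the 2×2 matrices g := [[h + ρ²w²/h, ρ²w/h],[ρ²w/h, ρ²/h]] and g̃ := [[h̃ + ρ²w̃²/h̃, ρ²w̃/h̃],[ρ²w̃/h̃, ρ²/h̃]]. Then det g = ρ² and trace(g̃·g⁻¹) − 2 = ((h − h̃)² + ρ²(w − w̃)²)/(h·h̃). In particular the Mazur distance of two Gram matrices in this rod-adapted parameterization extends smoothly to ρ = 0. -/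
open Matrix

/-- For ρ ≠ 0, h, h̃ > 0 and w, w̃ ∈ ℝ, the rod-adapted Gram matrices
g = [[h + ρ²w²/h, ρ²w/h],[ρ²w/h, ρ²/h]] and g̃ (with h̃, w̃) satisfy
det g = ρ² and trace(g̃·g⁻¹) − 2 = ((h − h̃)² + ρ²(w − w̃)²)/(h·h̃). -/
theorem stmt_1 (ρ h ht w wt : ℝ) (hρ : ρ ≠ 0) (hh : 0 < h) (hht : 0 < ht)
    (g gt : Matrix (Fin 2) (Fin 2) ℝ)
    (hg : g = !![h + ρ ^ 2 * w ^ 2 / h, ρ ^ 2 * w / h; ρ ^ 2 * w / h, ρ ^ 2 / h])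
    (hgt : gt = !![ht + ρ ^ 2 * wt ^ 2 / ht, ρ ^ 2 * wt / ht; ρ ^ 2 * wt / ht, ρ ^ 2 / ht]) :
    g.det = ρ ^ 2 ∧
    (gt * g⁻¹).trace - 2 = ((h - ht) ^ 2 + ρ ^ 2 * (w - wt) ^ 2) / (h * ht) := by
  have hh' := hh.ne'
  have hht' := hht.ne'
  have hdet : g.det = ρ ^ 2 := by
    subst hg; rw [Matrix.det_fin_two_of]; field_simp; ring
  refine ⟨hdet, ?_⟩
  rw [Matrix.inv_def, hdet, Matrix.trace_fin_two]
  subst hg hgt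
  simp [Matrix.adjugate_fin_two, Matrix.mul_apply, Fin.sum_univ_two]
  field_simp
  ring
end

section
/- Let v, v' ∈ ℝ² with det(v, v') = ε where ε ∈ {−1, 1}, let p > 0, and define the 2×2 matrix M := [[p⁻¹v₂, ε v'₂],[−p⁻¹v₁, −ε v'₁]]. Then: (i) det M = p⁻¹; (ii) Mᵀ v' = (−ε p⁻¹, 0) and Mᵀ v = (0, 1). Moreover, for a ∈ ℝ let g(ρ,z) := M · diag(μ_a⁺(ρ,z), μ_a⁻(ρ,z)) · Mᵀ; then det g = p⁻² ρ², g(0,z)·v = 0 for all z < a, and g(0,z)·v' = 0 for all z > a. -/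
open Matrix

/-!
Both columns of `M` are built from the rod vectors so that, by `det(v, v') = ε` and `ε² = 1`,
`Mᵀ` sends `v` to the second and `v'` to (a multiple of) the first basis vector. Hence
`g(ρ, z) v = M (μ⁻ · e₂)` and `g(ρ, z) v' ∝ M (μ⁺ · e₁)`, and on the axis `ρ = 0` the function
`μ⁻ = |z - a| + (z - a)` vanishes for `z < a` while `μ⁺ = |z - a| - (z - a)` vanishes for `z > a`.
The determinant is `(det M)² μ⁺ μ⁻ = p⁻² ((ρ² + (z - a)²) - (z - a)²)`.
-/

namespace Matrix

variable {n R : Type*} [Fintype n] [DecidableEq n]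

theorem mul_diagonal_mul_mulVec [Semiring R] (A B : Matrix n n R) (d w : n → R) :
    (A * diagonal d * B) *ᵥ w = A *ᵥ (d * (B *ᵥ w)) := by
  rw [← mulVec_mulVec, ← mulVec_mulVec]
  congr 1
  ext i
  exact mulVec_diagonal d _ i

theorem det_mul_diagonal_mul_transpose [CommRing R] (A : Matrix n n R) (d : n → R) :
    (A * diagonal d * Aᵀ).det = A.det ^ 2 * ∏ i, d i := by
  rw [det_mul, det_mul, det_transpose, det_diagonal]
  ring

end Matrix

noncomputable def rodMatrix (v v' : Fin 2 → ℝ) (ε p : ℝ) : Matrix (Fin 2) (Fin 2) ℝ :=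
  !![p⁻¹ * v 1, ε * v' 1; -(p⁻¹ * v 0), -(ε * v' 0)]

section RodMatrix

variable (v v' : Fin 2 → ℝ) (ε p : ℝ)

theorem det_rodMatrix :
    (rodMatrix v v' ε p).det = p⁻¹ * ε * (v 0 * v' 1 - v 1 * v' 0) := by
  rw [rodMatrix, det_fin_two_of]
  ring

theorem rodMatrix_transpose_mulVec_right :
    (rodMatrix v v' ε p)ᵀ *ᵥ v' = ![-(p⁻¹ * (v 0 * v' 1 - v 1 * v' 0)), 0] := by
  ext i
  fin_cases i <;>
    simp only [rodMatrix, mulVec, vec2_dotProduct, transpose_apply, of_apply, cons_val',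
      cons_val_zero, cons_val_one, cons_val_fin_one, Fin.zero_eta, Fin.mk_one] <;>
    ring

theorem rodMatrix_transpose_mulVec_left :
    (rodMatrix v v' ε p)ᵀ *ᵥ v = ![0, ε * (v 0 * v' 1 - v 1 * v' 0)] := by
  ext i
  fin_cases i <;>
    simp only [rodMatrix, mulVec, vec2_dotProduct, transpose_apply, of_apply, cons_val',
      cons_val_zero, cons_val_one, cons_val_fin_one, Fin.zero_eta, Fin.mk_one] <;>
    ring

end RodMatrix

theorem Real.sqrt_sq_add_sq_sub_mul_add (ρ t : ℝ) :
    (√(ρ ^ 2 + t ^ 2) - t) * (√(ρ ^ 2 + t ^ 2) + t) = ρ ^ 2 := by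
  linear_combination Real.sq_sqrt (by positivity : 0 ≤ ρ ^ 2 + t ^ 2)

theorem Real.sqrt_zero_sq_add_sq_sub_of_nonneg {t : ℝ} (ht : 0 ≤ t) :
    √((0 : ℝ) ^ 2 + t ^ 2) - t = 0 := by
  rw [zero_pow two_ne_zero, zero_add, Real.sqrt_sq ht, sub_self]

theorem Real.sqrt_zero_sq_add_sq_add_of_nonpos {t : ℝ} (ht : t ≤ 0) :
    √((0 : ℝ) ^ 2 + t ^ 2) + t = 0 := by
  rw [zero_pow two_ne_zero, zero_add, Real.sqrt_sq_eq_abs, abs_of_nonpos ht, neg_add_cancel]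

theorem stmt_7_general (v v' : Fin 2 → ℝ) (ε : ℝ) (hε : ε = 1 ∨ ε = -1)
    (hdet : v 0 * v' 1 - v 1 * v' 0 = ε) (p : ℝ) (a : ℝ)
    (M : Matrix (Fin 2) (Fin 2) ℝ)
    (hM : M = !![p⁻¹ * v 1, ε * v' 1; -(p⁻¹ * v 0), -(ε * v' 0)])
    (g : ℝ → ℝ → Matrix (Fin 2) (Fin 2) ℝ)
    (hg : ∀ ρ z, g ρ z =
      M * Matrix.diagonal ![Real.sqrt (ρ ^ 2 + (z - a) ^ 2) - (z - a),
                            Real.sqrt (ρ ^ 2 + (z - a) ^ 2) + (z - a)] * Mᵀ) :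
    M.det = p⁻¹ ∧
    Mᵀ.mulVec v' = ![-(ε * p⁻¹), 0] ∧
    Mᵀ.mulVec v = ![0, 1] ∧
    (∀ ρ z : ℝ, (g ρ z).det = (p ^ 2)⁻¹ * ρ ^ 2) ∧
    (∀ z : ℝ, z < a → (g 0 z).mulVec v = 0) ∧
    (∀ z : ℝ, a < z → (g 0 z).mulVec v' = 0) := by
  have hε2 : ε * ε = 1 := by rcases hε with rfl | rfl <;> norm_num
  obtain rfl : M = rodMatrix v v' ε p := hM
  have hdetM : (rodMatrix v v' ε p).det = p⁻¹ := by
    rw [det_rodMatrix, hdet]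
    linear_combination p⁻¹ * hε2
  have hv' : (rodMatrix v v' ε p)ᵀ *ᵥ v' = ![-(ε * p⁻¹), 0] := by
    rw [rodMatrix_transpose_mulVec_right, hdet, mul_comm]
  have hv : (rodMatrix v v' ε p)ᵀ *ᵥ v = ![0, 1] := by
    rw [rodMatrix_transpose_mulVec_left, hdet, hε2]
  refine ⟨hdetM, hv', hv, fun ρ z => ?_, fun z hz => ?_, fun z hz => ?_⟩
  · rw [hg, det_mul_diagonal_mul_transpose, hdetM, Fin.prod_univ_two]
    simp only [cons_val_zero, cons_val_one, Real.sqrt_sq_add_sq_sub_mul_add]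
    ring
  · rw [hg, mul_diagonal_mul_mulVec, hv,
      Real.sqrt_zero_sq_add_sq_add_of_nonpos (by linarith)]
    simp
  · rw [hg, mul_diagonal_mul_mulVec, hv',
      Real.sqrt_zero_sq_add_sq_sub_of_nonneg (by linarith)]
    simp

/-- Model map on an interior region: for consecutive rod vectors v, v' with
det(v, v') = ε = ±1, p > 0, and M = [[p⁻¹v₂, εv'₂],[−p⁻¹v₁, −εv'₁]], one has
det M = p⁻¹, Mᵀv' = (−εp⁻¹, 0), Mᵀv = (0,1); and with
g = M·diag(μ_a⁺, μ_a⁻)·Mᵀ, det g = p⁻²ρ², g(0,z)v = 0 for z < a and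
g(0,z)v' = 0 for z > a. -/
theorem stmt_7 (v v' : Fin 2 → ℝ) (ε : ℝ) (hε : ε = 1 ∨ ε = -1)
    (hdet : v 0 * v' 1 - v 1 * v' 0 = ε) (p : ℝ) (hp : 0 < p) (a : ℝ)
    (M : Matrix (Fin 2) (Fin 2) ℝ)
    (hM : M = !![p⁻¹ * v 1, ε * v' 1; -(p⁻¹ * v 0), -(ε * v' 0)])
    (g : ℝ → ℝ → Matrix (Fin 2) (Fin 2) ℝ)
    (hg : ∀ ρ z, g ρ z =
      M * Matrix.diagonal ![Real.sqrt (ρ ^ 2 + (z - a) ^ 2) - (z - a),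
                            Real.sqrt (ρ ^ 2 + (z - a) ^ 2) + (z - a)] * Mᵀ) :
    M.det = p⁻¹ ∧
    Mᵀ.mulVec v' = ![-(ε * p⁻¹), 0] ∧
    Mᵀ.mulVec v = ![0, 1] ∧
    (∀ ρ z : ℝ, (g ρ z).det = (p ^ 2)⁻¹ * ρ ^ 2) ∧
    (∀ z : ℝ, z < a → (g 0 z).mulVec v = 0) ∧
    (∀ z : ℝ, a < z → (g 0 z).mulVec v' = 0) :=
  stmt_7_general v v' ε hε hdet p a M hM g hg
end

section
/- Let U be an open subset of the half-plane {(ρ,z) : ρ > 0}, let H : U → ℝ be a smooth positive function satisfying ∂²H/∂ρ² + ρ⁻¹∂H/∂ρ + ∂²H/∂z² = 0, and let χ : U → ℝ be smooth with ∂χ/∂ρ = ρ ∂H/∂z and ∂χ/∂z = −ρ ∂H/∂ρ. Define the matrix-valued function g(ρ,z) := [[χ²/H + Hρ², χ/H],[χ/H, 1/H]]. Then g is invertible with det g = ρ², and ∂_ρ(ρ g⁻¹ ∂_ρ g) + ∂_z(ρ g⁻¹ ∂_z g) = 0 on U. -/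
open Matrix

/-- Partial derivative in the first (ρ) variable of a scalar function. -/
noncomputable def pdRho (u : ℝ → ℝ → ℝ) (ρ z : ℝ) : ℝ := deriv (fun t => u t z) ρ

/-- Partial derivative in the second (z) variable of a scalar function. -/
noncomputable def pdZ (u : ℝ → ℝ → ℝ) (ρ z : ℝ) : ℝ := deriv (fun t => u ρ t) z

/-- Entrywise partial derivative in the first (ρ) variable of a matrix-valued function. -/
noncomputable def mpdRho (g : ℝ → ℝ → Matrix (Fin 2) (Fin 2) ℝ) (ρ z : ℝ) :
    Matrix (Fin 2) (Fin 2) ℝ :=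
  Matrix.of fun i j => deriv (fun t => g t z i j) ρ

/-- Entrywise partial derivative in the second (z) variable of a matrix-valued function. -/
noncomputable def mpdZ (g : ℝ → ℝ → Matrix (Fin 2) (Fin 2) ℝ) (ρ z : ℝ) :
    Matrix (Fin 2) (Fin 2) ℝ :=
  Matrix.of fun i j => deriv (fun t => g ρ t i j) z

/-- Partial derivative in ρ via the Fréchet derivative of the uncurried map. -/
noncomputable def PdR (u : ℝ → ℝ → ℝ) (ρ z : ℝ) : ℝ :=
  fderiv ℝ (fun p : ℝ × ℝ => u p.1 p.2) (ρ, z) (1, 0)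

/-- Partial derivative in z via the Fréchet derivative of the uncurried map. -/
noncomputable def PdZ (u : ℝ → ℝ → ℝ) (ρ z : ℝ) : ℝ :=
  fderiv ℝ (fun p : ℝ × ℝ => u p.1 p.2) (ρ, z) (0, 1)

lemma myCongr {f : ℝ → ℝ} {v w x : ℝ} (h : HasDerivAt f v x) (hvw : v = w) :
    HasDerivAt f w x := hvw ▸ h

lemma sliceR {U : Set (ℝ × ℝ)} (hU : IsOpen U) {u : ℝ → ℝ → ℝ}
    (hu : ContDiffOn ℝ (⊤ : ℕ∞) (fun p : ℝ × ℝ => u p.1 p.2) U) {ρ z : ℝ} (h : (ρ, z) ∈ U) :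
    HasDerivAt (fun t => u t z) (PdR u ρ z) ρ := by
  have hd : DifferentiableAt ℝ (fun p : ℝ × ℝ => u p.1 p.2) (ρ, z) :=
    (hu.contDiffAt (hU.mem_nhds h)).differentiableAt (by simp)
  have hline : HasDerivAt (fun t : ℝ => ((t, z) : ℝ × ℝ)) ((1 : ℝ), (0 : ℝ)) ρ :=
    (hasDerivAt_id ρ).prodMk (hasDerivAt_const ρ z)
  exact hd.hasFDerivAt.comp_hasDerivAt ρ hline

lemma sliceZ {U : Set (ℝ × ℝ)} (hU : IsOpen U) {u : ℝ → ℝ → ℝ}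
    (hu : ContDiffOn ℝ (⊤ : ℕ∞) (fun p : ℝ × ℝ => u p.1 p.2) U) {ρ z : ℝ} (h : (ρ, z) ∈ U) :
    HasDerivAt (fun t => u ρ t) (PdZ u ρ z) z := by
  have hd : DifferentiableAt ℝ (fun p : ℝ × ℝ => u p.1 p.2) (ρ, z) :=
    (hu.contDiffAt (hU.mem_nhds h)).differentiableAt (by simp)
  have hline : HasDerivAt (fun t : ℝ => ((ρ, t) : ℝ × ℝ)) ((0 : ℝ), (1 : ℝ)) z :=
    (hasDerivAt_const z ρ).prodMk (hasDerivAt_id z)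
  exact hd.hasFDerivAt.comp_hasDerivAt z hline

lemma PdRsmooth {U : Set (ℝ × ℝ)} (hU : IsOpen U) {u : ℝ → ℝ → ℝ}
    (hu : ContDiffOn ℝ (⊤ : ℕ∞) (fun p : ℝ × ℝ => u p.1 p.2) U) :
    ContDiffOn ℝ (⊤ : ℕ∞) (fun p : ℝ × ℝ => PdR u p.1 p.2) U := by
  have h1 : ContDiffOn ℝ (⊤ : ℕ∞) (fderiv ℝ (fun p : ℝ × ℝ => u p.1 p.2)) U :=
    hu.fderiv_of_isOpen hU (by simp)
  exact (ContinuousLinearMap.apply ℝ ℝ (((1 : ℝ), (0 : ℝ)) : ℝ × ℝ)).contDiff.comp_contDiffOn h1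

lemma PdZsmooth {U : Set (ℝ × ℝ)} (hU : IsOpen U) {u : ℝ → ℝ → ℝ}
    (hu : ContDiffOn ℝ (⊤ : ℕ∞) (fun p : ℝ × ℝ => u p.1 p.2) U) :
    ContDiffOn ℝ (⊤ : ℕ∞) (fun p : ℝ × ℝ => PdZ u p.1 p.2) U := by
  have h1 : ContDiffOn ℝ (⊤ : ℕ∞) (fderiv ℝ (fun p : ℝ × ℝ => u p.1 p.2)) U :=
    hu.fderiv_of_isOpen hU (by simp)
  exact (ContinuousLinearMap.apply ℝ ℝ (((0 : ℝ), (1 : ℝ)) : ℝ × ℝ)).contDiff.comp_contDiffOn h1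

lemma mixedSymm {U : Set (ℝ × ℝ)} (hU : IsOpen U) {u : ℝ → ℝ → ℝ}
    (hu : ContDiffOn ℝ (⊤ : ℕ∞) (fun p : ℝ × ℝ => u p.1 p.2) U) {ρ z : ℝ} (h : (ρ, z) ∈ U) :
    PdR (PdZ u) ρ z = PdZ (PdR u) ρ z := by
  set F : ℝ × ℝ → ℝ := fun p => u p.1 p.2 with hFdef
  have hf' : ContDiffOn ℝ (⊤ : ℕ∞) (fderiv ℝ F) U := hu.fderiv_of_isOpen hU (by simp)
  have hdd : DifferentiableAt ℝ (fderiv ℝ F) (ρ, z) :=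
    (hf'.contDiffAt (hU.mem_nhds h)).differentiableAt (by simp)
  have hx := hdd.hasFDerivAt
  have hev : ∀ᶠ y in nhds (ρ, z), HasFDerivAt F (fderiv ℝ F y) y := by
    filter_upwards [hU.mem_nhds h] with y hy
    exact ((hu.contDiffAt (hU.mem_nhds hy)).differentiableAt (by simp)).hasFDerivAt
  have hsymm := second_derivative_symmetric_of_eventually hev hx
    (((1 : ℝ), (0 : ℝ)) : ℝ × ℝ) (((0 : ℝ), (1 : ℝ)) : ℝ × ℝ)
  have e1 : HasFDerivAt (fun p : ℝ × ℝ => fderiv ℝ F p (((0 : ℝ), (1 : ℝ)) : ℝ × ℝ))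
      ((ContinuousLinearMap.apply ℝ ℝ (((0 : ℝ), (1 : ℝ)) : ℝ × ℝ)).comp
        (fderiv ℝ (fderiv ℝ F) (ρ, z))) (ρ, z) :=
    (ContinuousLinearMap.apply ℝ ℝ (((0 : ℝ), (1 : ℝ)) : ℝ × ℝ)).hasFDerivAt.comp (ρ, z) hx
  have e2 : HasFDerivAt (fun p : ℝ × ℝ => fderiv ℝ F p (((1 : ℝ), (0 : ℝ)) : ℝ × ℝ))
      ((ContinuousLinearMap.apply ℝ ℝ (((1 : ℝ), (0 : ℝ)) : ℝ × ℝ)).comp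
        (fderiv ℝ (fderiv ℝ F) (ρ, z))) (ρ, z) :=
    (ContinuousLinearMap.apply ℝ ℝ (((1 : ℝ), (0 : ℝ)) : ℝ × ℝ)).hasFDerivAt.comp (ρ, z) hx
  have g1 : PdR (PdZ u) ρ z
      = fderiv ℝ (fderiv ℝ F) (ρ, z) (((1 : ℝ), (0 : ℝ)) : ℝ × ℝ) (((0 : ℝ), (1 : ℝ)) : ℝ × ℝ) := by
    show fderiv ℝ (fun p : ℝ × ℝ => fderiv ℝ F p (((0 : ℝ), (1 : ℝ)) : ℝ × ℝ)) (ρ, z)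
        (((1 : ℝ), (0 : ℝ)) : ℝ × ℝ) = _
    rw [e1.fderiv]
    rfl
  have g2 : PdZ (PdR u) ρ z
      = fderiv ℝ (fderiv ℝ F) (ρ, z) (((0 : ℝ), (1 : ℝ)) : ℝ × ℝ) (((1 : ℝ), (0 : ℝ)) : ℝ × ℝ) := by
    show fderiv ℝ (fun p : ℝ × ℝ => fderiv ℝ F p (((1 : ℝ), (0 : ℝ)) : ℝ × ℝ)) (ρ, z)
        (((0 : ℝ), (1 : ℝ)) : ℝ × ℝ) = _
    rw [e2.fderiv]
    rfl
  rw [g1, g2, hsymm]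

lemma mpdRho_apply (g : ℝ → ℝ → Matrix (Fin 2) (Fin 2) ℝ) (ρ z : ℝ) (i j : Fin 2) :
    mpdRho g ρ z i j = deriv (fun t => g t z i j) ρ := rfl

lemma mpdZ_apply (g : ℝ → ℝ → Matrix (Fin 2) (Fin 2) ℝ) (ρ z : ℝ) (i j : Fin 2) :
    mpdZ g ρ z i j = deriv (fun t => g ρ t i j) z := rfl
set_option maxHeartbeats 1000000 in
/-- The Gram matrix g = [[χ²/H + Hρ², χ/H],[χ/H, 1/H]] of an axisymmetric
Gibbons–Hawking metric (H positive, axisymmetric-harmonic; χ its conjugate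
potential) is invertible with det g = ρ² and solves the reduced vacuum Einstein
equation ∂_ρ(ρ g⁻¹∂_ρ g) + ∂_z(ρ g⁻¹∂_z g) = 0 on U ⊆ {ρ > 0}. -/
theorem stmt_12 (U : Set (ℝ × ℝ)) (hUopen : IsOpen U)
    (hUhalf : ∀ q ∈ U, 0 < q.1)
    (H χ : ℝ → ℝ → ℝ)
    (hHsmooth : ContDiffOn ℝ (⊤ : ℕ∞) (fun q : ℝ × ℝ => H q.1 q.2) U)
    (hχsmooth : ContDiffOn ℝ (⊤ : ℕ∞) (fun q : ℝ × ℝ => χ q.1 q.2) U)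
    (hHpos : ∀ q ∈ U, 0 < H q.1 q.2)
    (hHharm : ∀ q ∈ U,
      pdRho (pdRho H) q.1 q.2 + (q.1)⁻¹ * pdRho H q.1 q.2 + pdZ (pdZ H) q.1 q.2 = 0)
    (hconj1 : ∀ q ∈ U, pdRho χ q.1 q.2 = q.1 * pdZ H q.1 q.2)
    (hconj2 : ∀ q ∈ U, pdZ χ q.1 q.2 = -(q.1 * pdRho H q.1 q.2))
    (g : ℝ → ℝ → Matrix (Fin 2) (Fin 2) ℝ)
    (hg : ∀ ρ z, g ρ z =
      !![χ ρ z ^ 2 / H ρ z + H ρ z * ρ ^ 2, χ ρ z / H ρ z;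
         χ ρ z / H ρ z, 1 / H ρ z]) :
    ∀ q ∈ U,
      IsUnit (g q.1 q.2) ∧ (g q.1 q.2).det = q.1 ^ 2 ∧
      mpdRho (fun ρ z => ρ • ((g ρ z)⁻¹ * mpdRho g ρ z)) q.1 q.2 +
        mpdZ (fun ρ z => ρ • ((g ρ z)⁻¹ * mpdZ g ρ z)) q.1 q.2 = 0 := by
  -- conjugate relations in PdR/PdZ form
  have hPRχ : ∀ ρ z, (ρ, z) ∈ U → PdR χ ρ z = ρ * PdZ H ρ z := by
    intro ρ z h
    have h1 := (sliceR hUopen hχsmooth h).deriv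
    have h3 := (sliceZ hUopen hHsmooth h).deriv
    rw [← h1, ← h3]
    exact hconj1 (ρ, z) h
  have hPZχ : ∀ ρ z, (ρ, z) ∈ U → PdZ χ ρ z = -(ρ * PdR H ρ z) := by
    intro ρ z h
    have h1 := (sliceZ hUopen hχsmooth h).deriv
    have h3 := (sliceR hUopen hHsmooth h).deriv
    rw [← h1, ← h3]
    exact hconj2 (ρ, z) h
  have hPRH := PdRsmooth hUopen hHsmooth
  have hPZH := PdZsmooth hUopen hHsmooth
  -- det
  have hdet : ∀ ρ z, (ρ, z) ∈ U → (g ρ z).det = ρ ^ 2 := by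
    intro ρ z h
    have hne : H ρ z ≠ 0 := (hHpos (ρ, z) h).ne'
    rw [hg, Matrix.det_fin_two_of]
    field_simp
    ring
  -- inverse
  have hinv : ∀ ρ z, (ρ, z) ∈ U → (g ρ z)⁻¹ =
      (ρ ^ 2)⁻¹ • !![1 / H ρ z, -(χ ρ z / H ρ z);
        -(χ ρ z / H ρ z), χ ρ z ^ 2 / H ρ z + H ρ z * ρ ^ 2] := by
    intro ρ z h
    have hd := hdet ρ z h
    rw [Matrix.inv_def, hd, hg, Matrix.adjugate_fin_two_of, Ring.inverse_eq_inv']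
  -- entrywise ρ-derivative of g
  have hgr : ∀ ρ z, (ρ, z) ∈ U → mpdRho g ρ z =
      !![2 * χ ρ z * ρ * PdZ H ρ z / H ρ z - χ ρ z ^ 2 * PdR H ρ z / H ρ z ^ 2
            + PdR H ρ z * ρ ^ 2 + 2 * H ρ z * ρ,
         ρ * PdZ H ρ z / H ρ z - χ ρ z * PdR H ρ z / H ρ z ^ 2;
         ρ * PdZ H ρ z / H ρ z - χ ρ z * PdR H ρ z / H ρ z ^ 2,
         -(PdR H ρ z / H ρ z ^ 2)] := by
    intro ρ z h
    have hne : H ρ z ≠ 0 := (hHpos (ρ, z) h).ne'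
    have dh := sliceR hUopen hHsmooth h
    have dc : HasDerivAt (fun t => χ t z) (ρ * PdZ H ρ z) ρ := by
      have := sliceR hUopen hχsmooth h
      rwa [hPRχ ρ z h] at this
    have did : HasDerivAt (fun t : ℝ => t) 1 ρ := hasDerivAt_id ρ
    ext i j
    fin_cases i <;> fin_cases j <;>
      simp only [mpdRho, Matrix.of_apply, hg, Matrix.cons_val', Matrix.cons_val_zero,
        Matrix.cons_val_one, Matrix.head_cons, Matrix.empty_val', Matrix.cons_val_fin_one,
        Matrix.head_fin_const, Fin.isValue, Fin.zero_eta, Fin.mk_one]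
    · exact (myCongr (((dc.pow 2).div dh hne).add (dh.mul (did.pow 2)))
        (by field_simp; simp only [Pi.pow_apply]; ring)).deriv
    · exact (myCongr (dc.div dh hne) (by field_simp)).deriv
    · exact (myCongr (dc.div dh hne) (by field_simp)).deriv
    · exact (myCongr ((hasDerivAt_const ρ (1 : ℝ)).div dh hne) (by field_simp; ring)).deriv
  -- entrywise z-derivative of g
  have hgz : ∀ ρ z, (ρ, z) ∈ U → mpdZ g ρ z =
      !![-(2 * χ ρ z * ρ * PdR H ρ z / H ρ z) - χ ρ z ^ 2 * PdZ H ρ z / H ρ z ^ 2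
            + PdZ H ρ z * ρ ^ 2,
         -(ρ * PdR H ρ z / H ρ z) - χ ρ z * PdZ H ρ z / H ρ z ^ 2;
         -(ρ * PdR H ρ z / H ρ z) - χ ρ z * PdZ H ρ z / H ρ z ^ 2,
         -(PdZ H ρ z / H ρ z ^ 2)] := by
    intro ρ z h
    have hne : H ρ z ≠ 0 := (hHpos (ρ, z) h).ne'
    have dh := sliceZ hUopen hHsmooth h
    have dc : HasDerivAt (fun t => χ ρ t) (-(ρ * PdR H ρ z)) z := by
      have := sliceZ hUopen hχsmooth h
      rwa [hPZχ ρ z h] at this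
    ext i j
    fin_cases i <;> fin_cases j <;>
      simp only [mpdZ, Matrix.of_apply, hg, Matrix.cons_val', Matrix.cons_val_zero,
        Matrix.cons_val_one, Matrix.head_cons, Matrix.empty_val', Matrix.cons_val_fin_one,
        Matrix.head_fin_const, Fin.isValue, Fin.zero_eta, Fin.mk_one]
    · exact (myCongr (((dc.pow 2).div dh hne).add (dh.mul_const (ρ ^ 2)))
        (by field_simp; simp only [Pi.pow_apply]; ring)).deriv
    · exact (myCongr (dc.div dh hne) (by field_simp)).deriv
    · exact (myCongr (dc.div dh hne) (by field_simp)).deriv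
    · exact (myCongr ((hasDerivAt_const z (1 : ℝ)).div dh hne) (by field_simp; ring)).deriv
  -- the matrix A = ρ • (g⁻¹ * ∂ρ g)
  have hFA : ∀ ρ z, (ρ, z) ∈ U → ρ • ((g ρ z)⁻¹ * mpdRho g ρ z) =
      !![(χ ρ z * PdZ H ρ z + 2 * H ρ z ^ 2 + ρ * H ρ z * PdR H ρ z) / H ρ z ^ 2,
         PdZ H ρ z / H ρ z ^ 2;
         (-(χ ρ z ^ 2 * PdZ H ρ z) - 2 * H ρ z ^ 2 * χ ρ z - 2 * ρ * H ρ z * χ ρ z * PdR H ρ z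
            + ρ ^ 2 * H ρ z ^ 2 * PdZ H ρ z) / H ρ z ^ 2,
         (-(χ ρ z * PdZ H ρ z) - ρ * H ρ z * PdR H ρ z) / H ρ z ^ 2] := by
    intro ρ z h
    have hne : H ρ z ≠ 0 := (hHpos (ρ, z) h).ne'
    have hρne : ρ ≠ 0 := (hUhalf (ρ, z) h).ne'
    rw [hinv ρ z h, hgr ρ z h]
    ext i j
    fin_cases i <;> fin_cases j <;>
      simp [Matrix.mul_apply, Fin.sum_univ_two, Matrix.smul_apply, smul_eq_mul] <;>
      field_simp <;> ring
  -- the matrix B = ρ • (g⁻¹ * ∂z g)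
  have hFB : ∀ ρ z, (ρ, z) ∈ U → ρ • ((g ρ z)⁻¹ * mpdZ g ρ z) =
      !![(-(χ ρ z * PdR H ρ z) + ρ * H ρ z * PdZ H ρ z) / H ρ z ^ 2,
         -(PdR H ρ z / H ρ z ^ 2);
         (χ ρ z ^ 2 * PdR H ρ z - 2 * ρ * H ρ z * χ ρ z * PdZ H ρ z
            - ρ ^ 2 * H ρ z ^ 2 * PdR H ρ z) / H ρ z ^ 2,
         (χ ρ z * PdR H ρ z - ρ * H ρ z * PdZ H ρ z) / H ρ z ^ 2] := by
    intro ρ z h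
    have hne : H ρ z ≠ 0 := (hHpos (ρ, z) h).ne'
    have hρne : ρ ≠ 0 := (hUhalf (ρ, z) h).ne'
    rw [hinv ρ z h, hgz ρ z h]
    ext i j
    fin_cases i <;> fin_cases j <;>
      simp [Matrix.mul_apply, Fin.sum_univ_two, Matrix.smul_apply, smul_eq_mul] <;>
      field_simp <;> ring
  -- main conclusion
  intro q hq
  obtain ⟨ρ₀, z₀⟩ := q
  have hρ0 : 0 < ρ₀ := hUhalf (ρ₀, z₀) hq
  have hρne : ρ₀ ≠ 0 := hρ0.ne'
  have hne0 : H ρ₀ z₀ ≠ 0 := (hHpos (ρ₀, z₀) hq).ne'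
  refine ⟨(Matrix.isUnit_iff_isUnit_det _).2 ?_, hdet ρ₀ z₀ hq, ?_⟩
  · rw [hdet ρ₀ z₀ hq]
    exact (pow_ne_zero 2 hρne).isUnit
  -- eventual membership along the coordinate lines
  have hevρ : ∀ᶠ t in nhds ρ₀, (t, z₀) ∈ U := by
    have hc : ContinuousAt (fun t : ℝ => ((t, z₀) : ℝ × ℝ)) ρ₀ :=
      (continuous_id.prodMk continuous_const).continuousAt
    exact hc.preimage_mem_nhds (hUopen.mem_nhds hq)
  have hevz : ∀ᶠ t in nhds z₀, (ρ₀, t) ∈ U := by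
    have hc : ContinuousAt (fun t : ℝ => ((ρ₀, t) : ℝ × ℝ)) z₀ :=
      (continuous_const.prodMk continuous_id).continuousAt
    exact hc.preimage_mem_nhds (hUopen.mem_nhds hq)
  -- harmonicity in PdR/PdZ form
  have hharm : PdR (PdR H) ρ₀ z₀ + ρ₀⁻¹ * PdR H ρ₀ z₀ + PdZ (PdZ H) ρ₀ z₀ = 0 := by
    have h1 : pdRho (pdRho H) ρ₀ z₀ = PdR (PdR H) ρ₀ z₀ := by
      have heq : (fun t => pdRho H t z₀) =ᶠ[nhds ρ₀] (fun t => PdR H t z₀) :=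
        hevρ.mono fun t ht => (sliceR hUopen hHsmooth ht).deriv
      exact heq.deriv_eq.trans (sliceR hUopen hPRH hq).deriv
    have h2 : pdZ (pdZ H) ρ₀ z₀ = PdZ (PdZ H) ρ₀ z₀ := by
      have heq : (fun t => pdZ H ρ₀ t) =ᶠ[nhds z₀] (fun t => PdZ H ρ₀ t) :=
        hevz.mono fun t ht => (sliceZ hUopen hHsmooth ht).deriv
      exact heq.deriv_eq.trans (sliceZ hUopen hPZH hq).deriv
    have h3 : pdRho H ρ₀ z₀ = PdR H ρ₀ z₀ := (sliceR hUopen hHsmooth hq).deriv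
    have h4 := hHharm (ρ₀, z₀) hq
    rw [h1, h2, h3] at h4
    exact h4
  -- first order building blocks, ρ-direction
  have dh := sliceR hUopen hHsmooth hq
  have dhz := sliceZ hUopen hHsmooth hq
  have dc : HasDerivAt (fun t => χ t z₀) (ρ₀ * PdZ H ρ₀ z₀) ρ₀ := by
    have := sliceR hUopen hχsmooth hq; rwa [hPRχ ρ₀ z₀ hq] at this
  have dcz : HasDerivAt (fun t => χ ρ₀ t) (-(ρ₀ * PdR H ρ₀ z₀)) z₀ := by
    have := sliceZ hUopen hχsmooth hq; rwa [hPZχ ρ₀ z₀ hq] at this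
  have did : HasDerivAt (fun t : ℝ => t) 1 ρ₀ := hasDerivAt_id ρ₀
  -- second order building blocks
  have da : HasDerivAt (fun t => PdR H t z₀)
      (-(ρ₀⁻¹ * PdR H ρ₀ z₀) - PdZ (PdZ H) ρ₀ z₀) ρ₀ := by
    have d := sliceR hUopen hPRH hq
    have hval : PdR (PdR H) ρ₀ z₀ = -(ρ₀⁻¹ * PdR H ρ₀ z₀) - PdZ (PdZ H) ρ₀ z₀ := by
      linarith [hharm]
    rwa [hval] at d
  have db : HasDerivAt (fun t => PdZ H t z₀) (PdZ (PdR H) ρ₀ z₀) ρ₀ := by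
    have d := sliceR hUopen (PdZsmooth hUopen hHsmooth) hq
    rwa [mixedSymm hUopen hHsmooth hq] at d
  have daz : HasDerivAt (fun t => PdR H ρ₀ t) (PdZ (PdR H) ρ₀ z₀) z₀ :=
    sliceZ hUopen hPRH hq
  have dbz : HasDerivAt (fun t => PdZ H ρ₀ t) (PdZ (PdZ H) ρ₀ z₀) z₀ :=
    sliceZ hUopen hPZH hq
  -- abbreviations
  set h0 := H ρ₀ z₀ with hh0
  set c0 := χ ρ₀ z₀ with hc0
  set a0 := PdR H ρ₀ z₀ with ha0
  set b0 := PdZ H ρ₀ z₀ with hb0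
  set m0 := PdZ (PdR H) ρ₀ z₀ with hm0
  set q0 := PdZ (PdZ H) ρ₀ z₀ with hq0
  -- the four entry computations
  have e00r : deriv (fun t => ((t : ℝ) • ((g t z₀)⁻¹ * mpdRho g t z₀)) 0 0) ρ₀
      = (-2 * c0 * a0 * b0 + h0 * c0 * m0 + ρ₀ * h0 * b0 ^ 2 - ρ₀ * h0 * a0 ^ 2
          - ρ₀ * h0 ^ 2 * q0) / h0 ^ 3 := by
    have h1 : (fun t => ((t : ℝ) • ((g t z₀)⁻¹ * mpdRho g t z₀)) 0 0) =ᶠ[nhds ρ₀]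
        (fun t => (χ t z₀ * PdZ H t z₀ + 2 * H t z₀ ^ 2 + t * H t z₀ * PdR H t z₀)
          / H t z₀ ^ 2) :=
      hevρ.mono fun t ht => by simp only [hFA t z₀ ht]; simp
    rw [h1.deriv_eq]
    exact (myCongr ((((dc.mul db).add ((dh.pow 2).const_mul 2)).add
      ((did.mul dh).mul da)).div (dh.pow 2) (pow_ne_zero 2 hne0))
      (by simp only [Pi.pow_apply, Pi.mul_apply, Pi.add_apply, Pi.sub_apply, Pi.neg_apply, Pi.div_apply, ← hh0, ← ha0, ← hb0, ← hc0]; field_simp; ring)).deriv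
  have e00z : deriv (fun t => (ρ₀ • ((g ρ₀ t)⁻¹ * mpdZ g ρ₀ t)) 0 0) z₀
      = -((-2 * c0 * a0 * b0 + h0 * c0 * m0 + ρ₀ * h0 * b0 ^ 2 - ρ₀ * h0 * a0 ^ 2
          - ρ₀ * h0 ^ 2 * q0) / h0 ^ 3) := by
    have h1 : (fun t => (ρ₀ • ((g ρ₀ t)⁻¹ * mpdZ g ρ₀ t)) 0 0) =ᶠ[nhds z₀]
        (fun t => (-(χ ρ₀ t * PdR H ρ₀ t) + ρ₀ * H ρ₀ t * PdZ H ρ₀ t) / H ρ₀ t ^ 2) :=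
      hevz.mono fun t ht => by simp only [hFB ρ₀ t ht]; simp
    rw [h1.deriv_eq]
    exact (myCongr ((((dcz.mul daz).neg).add ((dhz.const_mul ρ₀).mul dbz)).div
      (dhz.pow 2) (pow_ne_zero 2 hne0)) (by simp only [Pi.pow_apply, Pi.mul_apply, Pi.add_apply, Pi.sub_apply, Pi.neg_apply, Pi.div_apply, ← hh0, ← ha0, ← hb0, ← hc0]; field_simp; ring)).deriv
  have e01r : deriv (fun t => ((t : ℝ) • ((g t z₀)⁻¹ * mpdRho g t z₀)) 0 1) ρ₀
      = (-2 * a0 * b0 + h0 * m0) / h0 ^ 3 := by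
    have h1 : (fun t => ((t : ℝ) • ((g t z₀)⁻¹ * mpdRho g t z₀)) 0 1) =ᶠ[nhds ρ₀]
        (fun t => PdZ H t z₀ / H t z₀ ^ 2) :=
      hevρ.mono fun t ht => by simp only [hFA t z₀ ht]; simp
    rw [h1.deriv_eq]
    exact (myCongr (db.div (dh.pow 2) (pow_ne_zero 2 hne0)) (by simp only [Pi.pow_apply, Pi.mul_apply, Pi.add_apply, Pi.sub_apply, Pi.neg_apply, Pi.div_apply, ← hh0, ← ha0, ← hb0, ← hc0]; field_simp; ring)).deriv
  have e01z : deriv (fun t => (ρ₀ • ((g ρ₀ t)⁻¹ * mpdZ g ρ₀ t)) 0 1) z₀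
      = -((-2 * a0 * b0 + h0 * m0) / h0 ^ 3) := by
    have h1 : (fun t => (ρ₀ • ((g ρ₀ t)⁻¹ * mpdZ g ρ₀ t)) 0 1) =ᶠ[nhds z₀]
        (fun t => -(PdR H ρ₀ t / H ρ₀ t ^ 2)) :=
      hevz.mono fun t ht => by simp only [hFB ρ₀ t ht]; simp
    rw [h1.deriv_eq]
    exact (myCongr ((daz.div (dhz.pow 2) (pow_ne_zero 2 hne0)).neg)
      (by simp only [Pi.pow_apply, Pi.mul_apply, Pi.add_apply, Pi.sub_apply, Pi.neg_apply, Pi.div_apply, ← hh0, ← ha0, ← hb0, ← hc0]; field_simp; ring)).deriv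
  have e10r : deriv (fun t => ((t : ℝ) • ((g t z₀)⁻¹ * mpdRho g t z₀)) 1 0) ρ₀
      = (2 * c0 ^ 2 * a0 * b0 - h0 * c0 ^ 2 * m0 - 2 * ρ₀ * h0 * c0 * b0 ^ 2
          + 2 * ρ₀ * h0 * c0 * a0 ^ 2 + 2 * ρ₀ * h0 ^ 2 * c0 * q0
          - 2 * ρ₀ ^ 2 * h0 ^ 2 * a0 * b0 + ρ₀ ^ 2 * h0 ^ 3 * m0) / h0 ^ 3 := by
    have h1 : (fun t => ((t : ℝ) • ((g t z₀)⁻¹ * mpdRho g t z₀)) 1 0) =ᶠ[nhds ρ₀]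
        (fun t => (-(χ t z₀ ^ 2 * PdZ H t z₀) - 2 * H t z₀ ^ 2 * χ t z₀
          - 2 * t * H t z₀ * χ t z₀ * PdR H t z₀
          + t ^ 2 * H t z₀ ^ 2 * PdZ H t z₀) / H t z₀ ^ 2) :=
      hevρ.mono fun t ht => by simp only [hFA t z₀ ht]; simp
    rw [h1.deriv_eq]
    exact (myCongr ((((((dc.pow 2).mul db).neg.sub (((dh.pow 2).const_mul 2).mul dc)).sub
      ((((did.const_mul 2).mul dh).mul dc).mul da)).add
      (((did.pow 2).mul (dh.pow 2)).mul db)).div (dh.pow 2) (pow_ne_zero 2 hne0))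
      (by simp only [Pi.pow_apply, Pi.mul_apply, Pi.add_apply, Pi.sub_apply, Pi.neg_apply, Pi.div_apply, ← hh0, ← ha0, ← hb0, ← hc0]; field_simp; ring)).deriv
  have e10z : deriv (fun t => (ρ₀ • ((g ρ₀ t)⁻¹ * mpdZ g ρ₀ t)) 1 0) z₀
      = -((2 * c0 ^ 2 * a0 * b0 - h0 * c0 ^ 2 * m0 - 2 * ρ₀ * h0 * c0 * b0 ^ 2
          + 2 * ρ₀ * h0 * c0 * a0 ^ 2 + 2 * ρ₀ * h0 ^ 2 * c0 * q0
          - 2 * ρ₀ ^ 2 * h0 ^ 2 * a0 * b0 + ρ₀ ^ 2 * h0 ^ 3 * m0) / h0 ^ 3) := by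
    have h1 : (fun t => (ρ₀ • ((g ρ₀ t)⁻¹ * mpdZ g ρ₀ t)) 1 0) =ᶠ[nhds z₀]
        (fun t => (χ ρ₀ t ^ 2 * PdR H ρ₀ t - 2 * ρ₀ * H ρ₀ t * χ ρ₀ t * PdZ H ρ₀ t
          - ρ₀ ^ 2 * H ρ₀ t ^ 2 * PdR H ρ₀ t) / H ρ₀ t ^ 2) :=
      hevz.mono fun t ht => by simp only [hFB ρ₀ t ht]; simp
    rw [h1.deriv_eq]
    exact (myCongr (((((dcz.pow 2).mul daz).sub
      (((dhz.const_mul (2 * ρ₀)).mul dcz).mul dbz)).sub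
      (((dhz.pow 2).const_mul (ρ₀ ^ 2)).mul daz)).div (dhz.pow 2) (pow_ne_zero 2 hne0))
      (by simp only [Pi.pow_apply, Pi.mul_apply, Pi.add_apply, Pi.sub_apply, Pi.neg_apply, Pi.div_apply, ← hh0, ← ha0, ← hb0, ← hc0]; field_simp; ring)).deriv
  have e11r : deriv (fun t => ((t : ℝ) • ((g t z₀)⁻¹ * mpdRho g t z₀)) 1 1) ρ₀
      = (2 * c0 * a0 * b0 - h0 * c0 * m0 - ρ₀ * h0 * b0 ^ 2 + ρ₀ * h0 * a0 ^ 2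
          + ρ₀ * h0 ^ 2 * q0) / h0 ^ 3 := by
    have h1 : (fun t => ((t : ℝ) • ((g t z₀)⁻¹ * mpdRho g t z₀)) 1 1) =ᶠ[nhds ρ₀]
        (fun t => (-(χ t z₀ * PdZ H t z₀) - t * H t z₀ * PdR H t z₀) / H t z₀ ^ 2) :=
      hevρ.mono fun t ht => by simp only [hFA t z₀ ht]; simp
    rw [h1.deriv_eq]
    exact (myCongr (((dc.mul db).neg.sub ((did.mul dh).mul da)).div (dh.pow 2)
      (pow_ne_zero 2 hne0)) (by simp only [Pi.pow_apply, Pi.mul_apply, Pi.add_apply, Pi.sub_apply, Pi.neg_apply, Pi.div_apply, ← hh0, ← ha0, ← hb0, ← hc0]; field_simp; ring)).deriv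
  have e11z : deriv (fun t => (ρ₀ • ((g ρ₀ t)⁻¹ * mpdZ g ρ₀ t)) 1 1) z₀
      = -((2 * c0 * a0 * b0 - h0 * c0 * m0 - ρ₀ * h0 * b0 ^ 2 + ρ₀ * h0 * a0 ^ 2
          + ρ₀ * h0 ^ 2 * q0) / h0 ^ 3) := by
    have h1 : (fun t => (ρ₀ • ((g ρ₀ t)⁻¹ * mpdZ g ρ₀ t)) 1 1) =ᶠ[nhds z₀]
        (fun t => (χ ρ₀ t * PdR H ρ₀ t - ρ₀ * H ρ₀ t * PdZ H ρ₀ t) / H ρ₀ t ^ 2) :=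
      hevz.mono fun t ht => by simp only [hFB ρ₀ t ht]; simp
    rw [h1.deriv_eq]
    exact (myCongr (((dcz.mul daz).sub ((dhz.const_mul ρ₀).mul dbz)).div (dhz.pow 2)
      (pow_ne_zero 2 hne0)) (by simp only [Pi.pow_apply, Pi.mul_apply, Pi.add_apply, Pi.sub_apply, Pi.neg_apply, Pi.div_apply, ← hh0, ← ha0, ← hb0, ← hc0]; field_simp; ring)).deriv
  -- assemble
  ext i j
  fin_cases i <;> fin_cases j <;>
    simp only [Matrix.add_apply, mpdRho_apply, mpdZ_apply, Matrix.zero_apply,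
      Fin.zero_eta, Fin.mk_one, Fin.isValue]
  · rw [e00r, e00z]; ring
  · rw [e01r, e01z]; ring
  · rw [e10r, e10z]; ring
  · rw [e11r, e11z]; ring
end

section
/- Let N > 0 and define, for r > N and θ ∈ (0, π): U(r) := (r − N)(4r − N)/(4r² − N²), Q(r) := r² − N²/4, ρ(r,θ) := ½ √((r − N)(4r − N)) · sinθ, and z(r,θ) := (r − 5N/8) cosθ. Then: (i) U(r)·Q(r)·sin²θ = ρ(r,θ)²; (ii) √(U(r)Q(r)) · ∂z/∂r = ∂ρ/∂θ; (iii) ∂z/∂θ = −√(U(r)Q(r)) · ∂ρ/∂r. -/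
/-!
Since `Q = (4r² − N²)/4` cancels the denominator of `U`, one has `UQ = (r − N)(4r − N)/4`, so
`√(UQ) = ½√((r − N)(4r − N))`, which is exactly the `r`-dependent amplitude of `ρ`. The two
Cauchy–Riemann identities then come down to
`d/dr √((r − N)(4r − N)) = (8r − 5N) / (2√((r − N)(4r − N)))`, whose numerator is `8 (r − 5N/8)`.
-/

namespace TaubBolt

variable {N r : ℝ}

lemma bolt_factor_pos (hN : 0 < N) (hr : N < r) : 0 < (r - N) * (4 * r - N) :=
  mul_pos (by linarith) (by linarith)

lemma U_mul_Q_eq (h : 4 * r ^ 2 - N ^ 2 ≠ 0) :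
    (r - N) * (4 * r - N) / (4 * r ^ 2 - N ^ 2) * (r ^ 2 - N ^ 2 / 4) =
      (r - N) * (4 * r - N) / 4 := by
  rw [div_mul_eq_mul_div, div_eq_div_iff h four_ne_zero]
  ring

lemma hasDerivAt_sqrt_bolt_factor (h : (r - N) * (4 * r - N) ≠ 0) :
    HasDerivAt (fun r' => √((r' - N) * (4 * r' - N)))
      ((8 * r - 5 * N) / (2 * √((r - N) * (4 * r - N)))) r := by
  have hfactor : HasDerivAt (fun r' => (r' - N) * (4 * r' - N))
      (1 * (4 * r - N) + (r - N) * (4 * 1)) r :=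
    ((hasDerivAt_id' r).sub_const N).mul (((hasDerivAt_id' r).const_mul 4).sub_const N)
  convert hfactor.sqrt h using 2
  ring

end TaubBolt

open TaubBolt in
/-- Weyl–Papapetrou coordinates for the Taub-Bolt instanton: for N > 0, with
U(r) = (r−N)(4r−N)/(4r²−N²), Q(r) = r² − N²/4,
ρ(r,θ) = ½√((r−N)(4r−N))·sinθ and z(r,θ) = (r − 5N/8)cosθ, for r > N and
θ ∈ (0,π): (i) U·Q·sin²θ = ρ²; (ii) √(UQ)·∂z/∂r = ∂ρ/∂θ;
(iii) ∂z/∂θ = −√(UQ)·∂ρ/∂r. -/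
theorem stmt_17 (N : ℝ) (hN : 0 < N)
    (U Q : ℝ → ℝ) (ρf zf : ℝ → ℝ → ℝ)
    (hU : ∀ r, U r = (r - N) * (4 * r - N) / (4 * r ^ 2 - N ^ 2))
    (hQ : ∀ r, Q r = r ^ 2 - N ^ 2 / 4)
    (hρ : ∀ r θ, ρf r θ = 1 / 2 * Real.sqrt ((r - N) * (4 * r - N)) * Real.sin θ)
    (hz : ∀ r θ, zf r θ = (r - 5 * N / 8) * Real.cos θ) :
    ∀ r θ : ℝ, N < r → θ ∈ Set.Ioo 0 Real.pi →
      (U r * Q r * Real.sin θ ^ 2 = ρf r θ ^ 2 ∧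
       Real.sqrt (U r * Q r) * deriv (fun r' => zf r' θ) r =
         deriv (fun θ' => ρf r θ') θ ∧
       deriv (fun θ' => zf r θ') θ =
         -(Real.sqrt (U r * Q r) * deriv (fun r' => ρf r' θ) r)) := by
  intro r θ hr _
  have hP := bolt_factor_pos hN hr
  have hUQ : U r * Q r = (r - N) * (4 * r - N) / 4 := by
    rw [hU, hQ]
    exact U_mul_Q_eq (by nlinarith)
  have hsqrt : √(U r * Q r) = √((r - N) * (4 * r - N)) / 2 := by
    rw [hUQ, Real.sqrt_div' _ (by norm_num), show (4 : ℝ) = 2 ^ 2 by norm_num,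
      Real.sqrt_sq zero_le_two]
  have hρr : deriv (fun r' => ρf r' θ) r =
      1 / 2 * ((8 * r - 5 * N) / (2 * √((r - N) * (4 * r - N)))) * Real.sin θ := by
    simp only [hρ]
    exact (((hasDerivAt_sqrt_bolt_factor hP.ne').const_mul _).mul_const _).deriv
  have hρθ : deriv (fun θ' => ρf r θ') θ = 1 / 2 * √((r - N) * (4 * r - N)) * Real.cos θ := by
    simp only [hρ]
    exact ((Real.hasDerivAt_sin θ).const_mul _).deriv
  have hzr : deriv (fun r' => zf r' θ) r = Real.cos θ := by
    simp only [hz]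
    exact ((((hasDerivAt_id' r).sub_const _).mul_const _).deriv).trans (one_mul _)
  have hzθ : deriv (fun θ' => zf r θ') θ = (r - 5 * N / 8) * -Real.sin θ := by
    simp only [hz]
    exact ((Real.hasDerivAt_cos θ).const_mul _).deriv
  refine ⟨?_, ?_, ?_⟩
  · rw [hUQ, hρ, mul_pow, mul_pow, Real.sq_sqrt hP.le]
    ring
  · rw [hsqrt, hzr, hρθ]
    ring
  · have hs : √((r - N) * (4 * r - N)) ≠ 0 := (Real.sqrt_pos.2 hP).ne'
    rw [hzθ, hsqrt, hρr]
    generalize √((r - N) * (4 * r - N)) = s at hs ⊢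
    field_simp
    ring
end

section
/- Let U ⊆ ℝ³ be open and let Φ, Φ̃ : U → Matrix (Fin 2) (Fin 2) ℝ be C² maps such that at every point Φ and Φ̃ are symmetric, positive definite, and det Φ = det Φ̃ = 1, and suppose both satisfy the harmonic map equation Σ_{k=1}^{3} ∂_k(Φ⁻¹ ∂_k Φ) = 0 and Σ_{k=1}^{3} ∂_k(Φ̃⁻¹ ∂_k Φ̃) = 0 on U. Then the function Ψ := trace(Φ̃ · Φ⁻¹) satisfies ΔΨ := Σ_{k=1}^{3} ∂²Ψ/∂x_k² ≥ 0 on U. -/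
open Matrix

/-- Directional partial derivative ∂_k of a scalar function on ℝ³. -/
noncomputable def pd3 (k : Fin 3) (f : (Fin 3 → ℝ) → ℝ) (x : Fin 3 → ℝ) : ℝ :=
  fderiv ℝ f x (Pi.single k 1)

/-- Entrywise directional partial derivative ∂_k of a matrix-valued function on ℝ³. -/
noncomputable def mpd3 (k : Fin 3) (F : (Fin 3 → ℝ) → Matrix (Fin 2) (Fin 2) ℝ)
    (x : Fin 3 → ℝ) : Matrix (Fin 2) (Fin 2) ℝ :=
  Matrix.of fun i j => fderiv ℝ (fun y => F y i j) x (Pi.single k 1)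

/-!
Write `J = Φ⁻¹ ∂Φ`, `J̃ = Φ̃⁻¹ ∂Φ̃` and `Δ = J̃ - J` for the derivative along a fixed direction.
Then `∂Ψ = tr (Φ̃ Δ Φ⁻¹)`, and differentiating once more, the symmetry of `Φ`, `Φ̃` and of their
derivatives gives `∂²Ψ = tr (Φ̃ Δ Φ⁻¹ Δᵀ) + tr (Φ̃ (∂J̃ - ∂J) Φ⁻¹)`. Summed over the coordinate
directions the second term vanishes by the harmonic map equations, while the first is a trace of the
form `tr (A B)` with `A = Φ̃` and `B = Δ Φ⁻¹ Δᵀ` positive semidefinite, hence nonnegative.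
-/

open Filter Topology
-- The ℓ∞ operator norm makes matrices a complete normed algebra, as the derivative of inversion
-- requires; being equivalent to any other norm, it does not affect derivatives.
open scoped Matrix.Norms.Operator MatrixOrder

theorem Matrix.PosSemidef.trace_mul_nonneg {n : Type*} [Fintype n] [DecidableEq n]
    {A B : Matrix n n ℝ} (hA : A.PosSemidef) (hB : B.PosSemidef) : 0 ≤ (A * B).trace := by
  set S := CFC.sqrt A
  have hS : Sᴴ = S := (CFC.sqrt_nonneg A).posSemidef.isHermitian
  have hAB : (A * B).trace = (Sᴴ * B * S).trace := by
    rw [hS, ← CFC.sqrt_mul_sqrt_self A hA.nonneg, Matrix.mul_assoc, Matrix.trace_mul_comm,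
      Matrix.mul_assoc]
  rw [hAB]
  exact (hB.conjTranspose_mul_mul_same S).trace_nonneg

theorem trace_mul_mul_mul_transpose_nonneg {n : Type*} [Fintype n] [DecidableEq n]
    {P Q : Matrix n n ℝ} (hP : P.PosSemidef) (hQ : Q.PosSemidef) (D : Matrix n n ℝ) :
    0 ≤ (Q * D * P * Dᵀ).trace := by
  have hDPD : (D * P * Dᴴ).PosSemidef := hP.mul_mul_conjTranspose_same D
  rw [Matrix.conjTranspose_eq_transpose_of_trivial] at hDPD
  simpa only [Matrix.mul_assoc] using hQ.trace_mul_nonneg hDPD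

-- `B` and `A` stand for derivatives of `Q` and `P`, so that `Q⁻¹ * B - P⁻¹ * A` is `Δ`.
theorem mazur_trace_identity {n : Type*} [Fintype n] [DecidableEq n] {P Q A B : Matrix n n ℝ}
    (hP : P.IsSymm) (hQ : Q.IsSymm) (hA : A.IsSymm) (hB : B.IsSymm) (hQu : IsUnit Q) :
    (B * (Q⁻¹ * B - P⁻¹ * A) * P⁻¹).trace - (Q * (Q⁻¹ * B - P⁻¹ * A) * (P⁻¹ * A * P⁻¹)).trace
      = (Q * (Q⁻¹ * B - P⁻¹ * A) * P⁻¹ * (Q⁻¹ * B - P⁻¹ * A)ᵀ).trace := by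
  have hDt : (Q⁻¹ * B - P⁻¹ * A)ᵀ = B * Q⁻¹ - A * P⁻¹ := by
    simp only [Matrix.transpose_sub, Matrix.transpose_mul, hA.eq, hB.eq, hP.inv.eq, hQ.inv.eq]
  have hQQ : Q⁻¹ * Q = 1 := Matrix.nonsing_inv_mul Q ((Matrix.isUnit_iff_isUnit_det Q).mp hQu)
  generalize Q⁻¹ * B - P⁻¹ * A = D at hDt ⊢
  have hcycle : (Q * D * P⁻¹ * (B * Q⁻¹)).trace = (B * D * P⁻¹).trace := by
    rw [← Matrix.mul_assoc, Matrix.trace_mul_comm, ← Matrix.mul_assoc, ← Matrix.mul_assoc,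
      ← Matrix.mul_assoc, hQQ, Matrix.one_mul, Matrix.trace_mul_comm, Matrix.mul_assoc]
  rw [hDt, Matrix.mul_sub, Matrix.trace_sub, hcycle]
  simp only [Matrix.mul_assoc]

theorem posDef_of_transpose_eq {n : Type*} [Fintype n] {M : Matrix n n ℝ} (hsymm : Mᵀ = M)
    (hpos : ∀ v : n → ℝ, v ≠ 0 → 0 < v ⬝ᵥ M.mulVec v) : M.PosDef :=
  Matrix.PosDef.of_dotProduct_mulVec_pos (Matrix.isHermitian_iff_isSymm.mpr hsymm) hpos

section Calculus

variable {E V W : Type*} [NormedAddCommGroup E] [NormedSpace ℝ E]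
  [NormedAddCommGroup V] [NormedSpace ℝ V] [NormedAddCommGroup W] [NormedSpace ℝ W]

theorem fderiv_linearMap_comp_apply [FiniteDimensional ℝ V] (L : V →ₗ[ℝ] W) {F : E → V} {x : E}
    (hF : DifferentiableAt ℝ F x) (v : E) :
    fderiv ℝ (fun y => L (F y)) x v = L (fderiv ℝ F x v) := by
  let L' : V →L[ℝ] W := LinearMap.toContinuousLinearMap L
  exact congrArg (· v) (L'.hasFDerivAt.comp x hF.hasFDerivAt).fderiv

theorem differentiableAt_fderiv_apply_of_contDiffOn {F : E → V} {U : Set E}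
    (hF : ContDiffOn ℝ 2 F U) (hU : IsOpen U) {x : E} (hx : x ∈ U) (v : E) :
    DifferentiableAt ℝ (fun y => fderiv ℝ F y v) x :=
  (((hF.fderiv_of_isOpen hU (by norm_num)).differentiableOn one_ne_zero).differentiableAt
    (hU.mem_nhds hx)).clm_apply (differentiableAt_const v)

end Calculus

section MatrixCalculus

variable {E : Type*} [NormedAddCommGroup E] [NormedSpace ℝ E]
  {n : Type*} [Fintype n] {F G : E → Matrix n n ℝ} {x : E}

theorem contDiffOn_of_entries [DecidableEq n] {k : WithTop ℕ∞} {U : Set E}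
    (hF : ∀ i j, ContDiffOn ℝ k (fun y => F y i j) U) : ContDiffOn ℝ k F U := by
  have hsum : F = fun y => ∑ i, ∑ j, F y i j • Matrix.single i j (1 : ℝ) := by
    funext y
    conv_lhs => rw [Matrix.matrix_eq_sum_single (F y)]
    simp [Matrix.smul_single]
  rw [hsum]
  exact ContDiffOn.sum fun i _ => ContDiffOn.sum fun j _ => (hF i j).smul contDiffOn_const

theorem fderiv_trace_apply (hF : DifferentiableAt ℝ F x) (v : E) :
    fderiv ℝ (fun y => (F y).trace) x v = (fderiv ℝ F x v).trace :=
  fderiv_linearMap_comp_apply (Matrix.traceLinearMap n ℝ ℝ) hF v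

theorem fderiv_entry_apply (hF : DifferentiableAt ℝ F x) (i j : n) (v : E) :
    fderiv ℝ (fun y => F y i j) x v = fderiv ℝ F x v i j :=
  fderiv_linearMap_comp_apply (Matrix.entryLinearMap ℝ ℝ i j) hF v

theorem isSymm_fderiv_apply (hF : DifferentiableAt ℝ F x) (hsymm : ∀ᶠ y in 𝓝 x, (F y).IsSymm)
    (v : E) : (fderiv ℝ F x v).IsSymm := by
  ext i j
  have hij : (fun y => F y j i) =ᶠ[𝓝 x] fun y => F y i j :=
    hsymm.mono fun y hy => by simpa using congrFun (congrFun hy i) j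
  rw [Matrix.transpose_apply, ← fderiv_entry_apply hF, ← fderiv_entry_apply hF, hij.fderiv_eq]

theorem fderiv_matrix_mul_apply [DecidableEq n] (hF : DifferentiableAt ℝ F x)
    (hG : DifferentiableAt ℝ G x) (v : E) :
    fderiv ℝ (fun y => F y * G y) x v = fderiv ℝ F x v * G x + F x * fderiv ℝ G x v := by
  calc fderiv ℝ (fun y => F y * G y) x v
      = (F x • fderiv ℝ G x + MulOpposite.op (G x) • fderiv ℝ F x) v :=
        congrArg (· v) (hF.hasFDerivAt.mul' hG.hasFDerivAt).fderiv
    _ = _ := by simp [add_comm]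

theorem DifferentiableAt.matrix_inv [DecidableEq n] (hF : DifferentiableAt ℝ F x)
    (hx : IsUnit (F x)) : DifferentiableAt ℝ (fun y => (F y)⁻¹) x := by
  simp only [Matrix.nonsing_inv_eq_ringInverse]
  exact hF.inverse hx

theorem fderiv_matrix_inv_apply [DecidableEq n] (hF : DifferentiableAt ℝ F x) (hx : IsUnit (F x))
    (v : E) :
    fderiv ℝ (fun y => (F y)⁻¹) x v = -((F x)⁻¹ * fderiv ℝ F x v * (F x)⁻¹) := by
  obtain ⟨u, hu⟩ := hx
  simp only [Matrix.nonsing_inv_eq_ringInverse]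
  have hinv : HasFDerivAt Ring.inverse
      (-ContinuousLinearMap.mulLeftRight ℝ (Matrix n n ℝ) ↑u⁻¹ ↑u⁻¹) (F x) :=
    hu ▸ hasFDerivAt_ringInverse u
  refine (congrArg (· v) (hinv.comp x hF.hasFDerivAt).fderiv).trans ?_
  rw [← hu, Ring.inverse_unit]
  rfl

end MatrixCalculus

section MazurIdentity

variable {E : Type*} [NormedAddCommGroup E] [NormedSpace ℝ E]
  {n : Type*} [Fintype n] [DecidableEq n] {x : E}

noncomputable def leftLogDeriv (F : E → Matrix n n ℝ) (v y : E) : Matrix n n ℝ :=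
  (F y)⁻¹ * fderiv ℝ F y v

theorem fderiv_trace_mul_inv_apply {P Q : E → Matrix n n ℝ}
    (hP : DifferentiableAt ℝ P x) (hQ : DifferentiableAt ℝ Q x)
    (hPu : IsUnit (P x)) (hQu : IsUnit (Q x)) (v : E) :
    fderiv ℝ (fun y => (Q y * (P y)⁻¹).trace) x v
      = (Q x * (leftLogDeriv Q v x - leftLogDeriv P v x) * (P x)⁻¹).trace := by
  have hPinv := hP.matrix_inv hPu
  have hQQ : Q x * (Q x)⁻¹ = 1 :=
    Matrix.mul_nonsing_inv _ ((Matrix.isUnit_iff_isUnit_det _).mp hQu)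
  rw [fderiv_trace_apply (hQ.fun_mul hPinv), fderiv_matrix_mul_apply hQ hPinv,
    fderiv_matrix_inv_apply hP hPu]
  congr 1
  simp only [leftLogDeriv, Matrix.mul_sub, Matrix.sub_mul, ← Matrix.mul_assoc, hQQ,
    Matrix.one_mul, Matrix.mul_neg]
  abel

theorem fderiv_trace_mul_mul_inv_apply {P Q D : E → Matrix n n ℝ}
    (hP : DifferentiableAt ℝ P x) (hQ : DifferentiableAt ℝ Q x) (hD : DifferentiableAt ℝ D x)
    (hPu : IsUnit (P x)) (v : E) :
    fderiv ℝ (fun y => (Q y * D y * (P y)⁻¹).trace) x v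
      = (fderiv ℝ Q x v * D x * (P x)⁻¹).trace + (Q x * fderiv ℝ D x v * (P x)⁻¹).trace
        - (Q x * D x * ((P x)⁻¹ * fderiv ℝ P x v * (P x)⁻¹)).trace := by
  have hPinv := hP.matrix_inv hPu
  rw [fderiv_trace_apply ((hQ.fun_mul hD).fun_mul hPinv),
    fderiv_matrix_mul_apply (hQ.fun_mul hD) hPinv, fderiv_matrix_mul_apply hQ hD,
    fderiv_matrix_inv_apply hP hPu]
  simp only [Matrix.add_mul, Matrix.mul_neg, Matrix.trace_add, Matrix.trace_neg]
  ring

theorem differentiableAt_leftLogDeriv {P : E → Matrix n n ℝ} {U : Set E}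
    (hP : ContDiffOn ℝ 2 P U) (hU : IsOpen U) (hx : x ∈ U) (hPu : IsUnit (P x)) (v : E) :
    DifferentiableAt ℝ (leftLogDeriv P v) x :=
  ((hP.differentiableOn two_ne_zero).differentiableAt (hU.mem_nhds hx)).matrix_inv hPu |>.fun_mul
    (differentiableAt_fderiv_apply_of_contDiffOn hP hU hx v)

theorem fderiv_fderiv_trace_mul_inv_apply {P Q : E → Matrix n n ℝ} {U : Set E}
    (hU : IsOpen U) (hP : ContDiffOn ℝ 2 P U) (hQ : ContDiffOn ℝ 2 Q U)
    (hPsymm : ∀ y ∈ U, (P y).IsSymm) (hQsymm : ∀ y ∈ U, (Q y).IsSymm)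
    (hPu : ∀ y ∈ U, IsUnit (P y)) (hQu : ∀ y ∈ U, IsUnit (Q y)) (hx : x ∈ U) (v : E) :
    fderiv ℝ (fun y => fderiv ℝ (fun z => (Q z * (P z)⁻¹).trace) y v) x v
      = (Q x * (leftLogDeriv Q v x - leftLogDeriv P v x) * (P x)⁻¹
          * (leftLogDeriv Q v x - leftLogDeriv P v x)ᵀ).trace
        + (Q x * (fderiv ℝ (leftLogDeriv Q v) x v - fderiv ℝ (leftLogDeriv P v) x v)
          * (P x)⁻¹).trace := by
  have hUx : U ∈ 𝓝 x := hU.mem_nhds hx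
  have hPd : ∀ y ∈ U, DifferentiableAt ℝ P y :=
    fun y hy => (hP.differentiableOn two_ne_zero).differentiableAt (hU.mem_nhds hy)
  have hQd : ∀ y ∈ U, DifferentiableAt ℝ Q y :=
    fun y hy => (hQ.differentiableOn two_ne_zero).differentiableAt (hU.mem_nhds hy)
  have hLP := differentiableAt_leftLogDeriv hP hU hx (hPu x hx) v
  have hLQ := differentiableAt_leftLogDeriv hQ hU hx (hQu x hx) v
  have hfirst : (fun y => fderiv ℝ (fun z => (Q z * (P z)⁻¹).trace) y v) =ᶠ[𝓝 x]
      fun y => (Q y * (leftLogDeriv Q v y - leftLogDeriv P v y) * (P y)⁻¹).trace :=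
    Filter.mem_of_superset hUx fun y hy =>
      fderiv_trace_mul_inv_apply (hPd y hy) (hQd y hy) (hPu y hy) (hQu y hy) v
  have hA := isSymm_fderiv_apply (hPd x hx) (Filter.mem_of_superset hUx hPsymm) v
  have hB := isSymm_fderiv_apply (hQd x hx) (Filter.mem_of_superset hUx hQsymm) v
  have hsub : fderiv ℝ (fun y => leftLogDeriv Q v y - leftLogDeriv P v y) x v
      = fderiv ℝ (leftLogDeriv Q v) x v - fderiv ℝ (leftLogDeriv P v) x v :=
    congrArg (· v) (fderiv_fun_sub hLQ hLP)
  have hmazur := mazur_trace_identity (hPsymm x hx) (hQsymm x hx) hA hB (hQu x hx)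
  rw [hfirst.fderiv_eq, fderiv_trace_mul_mul_inv_apply (hPd x hx) (hQd x hx)
    (hLQ.fun_sub hLP) (hPu x hx), hsub]
  simp only [leftLogDeriv] at hmazur ⊢
  linarith

theorem sum_fderiv_fderiv_trace_mul_inv_nonneg {ι : Type*} [Fintype ι]
    {P Q : E → Matrix n n ℝ} {U : Set E} (hU : IsOpen U)
    (hP : ContDiffOn ℝ 2 P U) (hQ : ContDiffOn ℝ 2 Q U)
    (hPpos : ∀ y ∈ U, (P y).PosDef) (hQpos : ∀ y ∈ U, (Q y).PosDef) (hx : x ∈ U) (v : ι → E)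
    (hPharm : ∑ i, fderiv ℝ (leftLogDeriv P (v i)) x (v i) = 0)
    (hQharm : ∑ i, fderiv ℝ (leftLogDeriv Q (v i)) x (v i) = 0) :
    0 ≤ ∑ i, fderiv ℝ (fun y => fderiv ℝ (fun z => (Q z * (P z)⁻¹).trace) y (v i)) x (v i) := by
  have hsymm {R : E → Matrix n n ℝ} (hR : ∀ y ∈ U, (R y).PosDef) : ∀ y ∈ U, (R y).IsSymm :=
    fun y hy => Matrix.isHermitian_iff_isSymm.mp (hR y hy).isHermitian
  have hunit {R : E → Matrix n n ℝ} (hR : ∀ y ∈ U, (R y).PosDef) : ∀ y ∈ U, IsUnit (R y) :=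
    fun y hy => (hR y hy).isUnit
  rw [Finset.sum_congr rfl fun i _ => fderiv_fderiv_trace_mul_inv_apply hU hP hQ (hsymm hPpos)
    (hsymm hQpos) (hunit hPpos) (hunit hQpos) hx (v i), Finset.sum_add_distrib]
  have hharm : ∑ i, (Q x * (fderiv ℝ (leftLogDeriv Q (v i)) x (v i)
      - fderiv ℝ (leftLogDeriv P (v i)) x (v i)) * (P x)⁻¹).trace = 0 := by
    rw [← Matrix.trace_sum, ← Finset.sum_mul, ← Finset.mul_sum, Finset.sum_sub_distrib, hPharm,
      hQharm, sub_zero, Matrix.mul_zero, Matrix.zero_mul, Matrix.trace_zero]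
  rw [hharm, add_zero]
  exact Finset.sum_nonneg fun i _ => trace_mul_mul_mul_transpose_nonneg
    (hPpos x hx).inv.posSemidef (hQpos x hx).posSemidef _

end MazurIdentity

theorem mpd3_eq_fderiv {F : (Fin 3 → ℝ) → Matrix (Fin 2) (Fin 2) ℝ} {x : Fin 3 → ℝ}
    (hF : DifferentiableAt ℝ F x) (k : Fin 3) : mpd3 k F x = fderiv ℝ F x (Pi.single k 1) := by
  ext i j
  exact fderiv_entry_apply hF i j _

theorem mpd3_inv_mul_mpd3_eq {P : (Fin 3 → ℝ) → Matrix (Fin 2) (Fin 2) ℝ} {U : Set (Fin 3 → ℝ)}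
    {x : Fin 3 → ℝ} (hU : IsOpen U) (hP : ContDiffOn ℝ 2 P U) (hPu : ∀ y ∈ U, IsUnit (P y))
    (hx : x ∈ U) (k : Fin 3) :
    mpd3 k (fun y => (P y)⁻¹ * mpd3 k P y) x
      = fderiv ℝ (leftLogDeriv P (Pi.single k 1)) x (Pi.single k 1) := by
  have heq : (fun y => (P y)⁻¹ * mpd3 k P y) =ᶠ[𝓝 x] leftLogDeriv P (Pi.single k 1) :=
    Filter.mem_of_superset (hU.mem_nhds hx) fun y hy =>
      show (P y)⁻¹ * mpd3 k P y = leftLogDeriv P (Pi.single k 1) y by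
        rw [mpd3_eq_fderiv ((hP.differentiableOn two_ne_zero).differentiableAt (hU.mem_nhds hy))]
        rfl
  rw [mpd3_eq_fderiv ((differentiableAt_leftLogDeriv hP hU hx (hPu x hx) _).congr_of_eventuallyEq
    heq), heq.fderiv_eq]

theorem stmt_19_general (U : Set (Fin 3 → ℝ)) (hUopen : IsOpen U)
    (Φ Φt : (Fin 3 → ℝ) → Matrix (Fin 2) (Fin 2) ℝ)
    (hΦC2 : ∀ i j, ContDiffOn ℝ 2 (fun x => Φ x i j) U)
    (hΦtC2 : ∀ i j, ContDiffOn ℝ 2 (fun x => Φt x i j) U)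
    (hΦsymm : ∀ x ∈ U, (Φ x)ᵀ = Φ x)
    (hΦtsymm : ∀ x ∈ U, (Φt x)ᵀ = Φt x)
    (hΦpd : ∀ x ∈ U, ∀ v : Fin 2 → ℝ, v ≠ 0 → 0 < v ⬝ᵥ (Φ x).mulVec v)
    (hΦtpd : ∀ x ∈ U, ∀ v : Fin 2 → ℝ, v ≠ 0 → 0 < v ⬝ᵥ (Φt x).mulVec v)
    (hΦharm : ∀ x ∈ U, ∑ k : Fin 3, mpd3 k (fun y => (Φ y)⁻¹ * mpd3 k Φ y) x = 0)
    (hΦtharm : ∀ x ∈ U, ∑ k : Fin 3, mpd3 k (fun y => (Φt y)⁻¹ * mpd3 k Φt y) x = 0) :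
    ∀ x ∈ U,
      0 ≤ ∑ k : Fin 3, pd3 k (pd3 k (fun y => (Φt y * (Φ y)⁻¹).trace)) x := by
  intro x hx
  have hP := contDiffOn_of_entries hΦC2
  have hQ := contDiffOn_of_entries hΦtC2
  have hPpos y (hy : y ∈ U) := posDef_of_transpose_eq (hΦsymm y hy) (hΦpd y hy)
  have hQpos y (hy : y ∈ U) := posDef_of_transpose_eq (hΦtsymm y hy) (hΦtpd y hy)
  refine sum_fderiv_fderiv_trace_mul_inv_nonneg hUopen hP hQ hPpos hQpos hx _ ?_ ?_
  · simpa only [mpd3_inv_mul_mpd3_eq hUopen hP (fun y hy => (hPpos y hy).isUnit) hx]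
      using hΦharm x hx
  · simpa only [mpd3_inv_mul_mpd3_eq hUopen hQ (fun y hy => (hQpos y hy).isUnit) hx]
      using hΦtharm x hx

/-- Mazur identity: if Φ, Φ̃ are C² maps on an open U ⊆ ℝ³ with values in
unimodular symmetric positive-definite 2×2 matrices, both satisfying the harmonic
map equation Σₖ ∂ₖ(Φ⁻¹∂ₖΦ) = 0, then Ψ = trace(Φ̃Φ⁻¹) is subharmonic on U. -/
theorem stmt_19 (U : Set (Fin 3 → ℝ)) (hUopen : IsOpen U)
    (Φ Φt : (Fin 3 → ℝ) → Matrix (Fin 2) (Fin 2) ℝ)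
    (hΦC2 : ∀ i j, ContDiffOn ℝ 2 (fun x => Φ x i j) U)
    (hΦtC2 : ∀ i j, ContDiffOn ℝ 2 (fun x => Φt x i j) U)
    (hΦsymm : ∀ x ∈ U, (Φ x)ᵀ = Φ x)
    (hΦtsymm : ∀ x ∈ U, (Φt x)ᵀ = Φt x)
    (hΦpd : ∀ x ∈ U, ∀ v : Fin 2 → ℝ, v ≠ 0 → 0 < v ⬝ᵥ (Φ x).mulVec v)
    (hΦtpd : ∀ x ∈ U, ∀ v : Fin 2 → ℝ, v ≠ 0 → 0 < v ⬝ᵥ (Φt x).mulVec v)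
    (hΦdet : ∀ x ∈ U, (Φ x).det = 1)
    (hΦtdet : ∀ x ∈ U, (Φt x).det = 1)
    (hΦharm : ∀ x ∈ U, ∑ k : Fin 3, mpd3 k (fun y => (Φ y)⁻¹ * mpd3 k Φ y) x = 0)
    (hΦtharm : ∀ x ∈ U, ∑ k : Fin 3, mpd3 k (fun y => (Φt y)⁻¹ * mpd3 k Φt y) x = 0) :
    ∀ x ∈ U,
      0 ≤ ∑ k : Fin 3, pd3 k (pd3 k (fun y => (Φt y * (Φ y)⁻¹).trace)) x :=
  stmt_19_general U hUopen Φ Φt hΦC2 hΦtC2 hΦsymm hΦtsymm hΦpd hΦtpd hΦharm hΦtharm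
end
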